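/- arXiv:2512.17365 — 2 statements merged into one kernel-verified Lean document; each statement's English description precedes it below -/
import Mathlib

section
/- In the Schumpeterian game with payoff matrix [[(π+α−β)/2 − c, π+α−β−c], [β, π/2]] satisfying π/2 + (α−β)/2 < β + c and π/2 + α > β + c (with π, c > 0, α > β ≥ 0), the interior equalizing state has innovator fraction x*_I = (π + 2(α−β−c))/(α+β) and imitator fraction x*_R = (2c − α − π + 3β)/(α+β), and both fractions lie strictly in (0,1). -/
/-- In the Schumpeterian game satisfying the Schumpeterian condition, the
interior equalizing state has innovator fraction (π+2(α−β−c))/(α+β) and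
imitator fraction (2c−α−π+3β)/(α+β), both strictly in (0,1). -/
theorem schumpeterian_state (π c α β : ℝ)
    (hπ : 0 < π) (hc : 0 < c) (hαβ : β < α) (hβ : 0 ≤ β)
    (hsch1 : π / 2 + (α - β) / 2 < β + c) (hsch2 : π / 2 + α > β + c) :
    let xI : ℝ := (π + 2 * (α - β - c)) / (α + β)
    let xR : ℝ := (2 * c - α - π + 3 * β) / (α + β)
    xI ∈ Set.Ioo (0 : ℝ) 1 ∧ xR ∈ Set.Ioo (0 : ℝ) 1 ∧ xI + xR = 1 ∧
    (π + α - β - c - (π + α - β) / 2 * xI) = (β - π / 2) * xI + π / 2 := by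
  have hs : 0 < α + β := by linarith
  intro xI xR
  have h1 : 0 < xI := div_pos (by linarith) hs
  have h2 : xI < 1 := (div_lt_one hs).2 (by linarith)
  have h3 : 0 < xR := div_pos (by linarith) hs
  have h4 : xR < 1 := (div_lt_one hs).2 (by linarith)
  refine ⟨⟨h1, h2⟩, ⟨h3, h4⟩, ?_, ?_⟩ <;>
  · show _ = _
    simp only [xI, xR]
    field_simp [xI, xR]
    ring
end

section
/- In the Schumpeterian game, the condition π/2 + (α−β)/2 < β + c together with π/2 + α > β + c is equivalent to the payoff matrix satisfying the anti-coordination conditions a < c' and b > d, where a = (π+α−β)/2 − c, b = π+α−β−c, c' = β, d = π/2; consequently the Schumpeterian state x* given by the equalizing formula is the unique evolutionarily stable state of the game. -/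
/-- Bilinear payoff form pᵀ M q for M = [[a,b],[c,d]]. -/
def quad (a b c d : ℝ) (p q : ℝ × ℝ) : ℝ :=
  p.1 * (a * q.1 + b * q.2) + p.2 * (c * q.1 + d * q.2)

/-- Membership in the 1-simplex. -/
def InSimplex (q : ℝ × ℝ) : Prop := q.1 + q.2 = 1 ∧ 0 ≤ q.1 ∧ 0 ≤ q.2

/-- p is an evolutionarily stable state for M = [[a,b],[c,d]]. -/
def IsESS (a b c d : ℝ) (p : ℝ × ℝ) : Prop :=
  InSimplex p ∧
  ∀ q : ℝ × ℝ, InSimplex q →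
    quad a b c d p p ≥ quad a b c d q p ∧
    (q ≠ p → quad a b c d p p = quad a b c d q p → quad a b c d p q > quad a b c d q q)

/-- The Schumpeterian condition is equivalent to the anti-coordination
conditions for the payoff matrix [[(π+α−β)/2 − c, π+α−β−c], [β, π/2]];
consequently the Schumpeterian state is the unique ESS of the game. -/
theorem schumpeterian_condition_ESS (π c α β : ℝ)
    (hπ : 0 < π) (hc : 0 < c) (hαβ : β < α) (hβ : 0 ≤ β) :
    ((π / 2 + (α - β) / 2 < β + c ∧ π / 2 + α > β + c) ↔
      ((π + α - β) / 2 - c < β ∧ π + α - β - c > π / 2)) ∧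
    ((π / 2 + (α - β) / 2 < β + c ∧ π / 2 + α > β + c) →
      let xI : ℝ := (π + 2 * (α - β - c)) / (α + β)
      let xs : ℝ × ℝ := (xI, 1 - xI)
      IsESS ((π + α - β) / 2 - c) (π + α - β - c) β (π / 2) xs ∧
      ∀ q : ℝ × ℝ, IsESS ((π + α - β) / 2 - c) (π + α - β - c) β (π / 2) q → q = xs) := by
  constructor
  · constructor
    · rintro ⟨h1, h2⟩; constructor <;> linarith
    · rintro ⟨h1, h2⟩; constructor <;> linarith
  · rintro ⟨h1, h2⟩
    intro xI xs
    have hab : (0:ℝ) < α + β := by linarith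
    have hxI : xI * (α + β) = π + 2 * (α - β - c) := by
      show (π + 2 * (α - β - c)) / (α + β) * (α + β) = _
      field_simp
    have hnum : (0:ℝ) < π + 2 * (α - β - c) := by linarith
    have hlt : π + 2 * (α - β - c) < α + β := by linarith
    have hxI0 : 0 ≤ xI := le_of_lt (div_pos hnum hab)
    have hxI1 : xI ≤ 1 := by
      rw [div_le_one hab]; linarith
    set A := (π + α - β) / 2 - c with hA
    set B := π + α - β - c with hB
    set D := π / 2 with hD
    -- key identity
    have key : ∀ x y : ℝ, quad A B β D (x, 1-x) (y, 1-y) - quad A B β D (y, 1-y) (y, 1-y)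
        = (x - y) * (xI - y) * ((α + β) / 2) := by
      intro x y
      simp only [quad, hA, hB, hD]
      linear_combination (-(x - y) / 2) * hxI
    have hsimp : InSimplex xs := by
      refine ⟨by simp [xs, InSimplex], by simpa using hxI0, by simp [xs]; linarith⟩
    refine ⟨⟨hsimp, ?_⟩, ?_⟩
    · intro q hq
      obtain ⟨hsum, hq0, hq1⟩ := hq
      have hq' : q = (q.1, 1 - q.1) := by
        have : q.2 = 1 - q.1 := by linarith
        ext
        · rfl
        · exact this
      have eq1 : quad A B β D q xs = quad A B β D xs xs := by
        rw [hq']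
        show quad A B β D (q.1, 1 - q.1) (xI, 1 - xI) = quad A B β D (xI, 1 - xI) (xI, 1 - xI)
        simp only [quad, hA, hB, hD]
        linear_combination (-(q.1 - xI) / 2) * hxI
      constructor
      · exact ge_of_eq eq1.symm
      · intro hne _
        have hne1 : q.1 ≠ xI := by
          intro h
          apply hne
          rw [hq', h]
        have h2' := key xI q.1
        rw [hq']
        have : quad A B β D (xI, 1-xI) (q.1, 1-q.1) - quad A B β D (q.1, 1-q.1) (q.1, 1-q.1)
            = (xI - q.1) * (xI - q.1) * ((α + β) / 2) := key xI q.1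
        have hne0 : xI - q.1 ≠ 0 := fun h => hne1 (by linarith [sub_eq_zero.mp h])
        have hpos : 0 < (xI - q.1) * (xI - q.1) * ((α + β) / 2) :=
          mul_pos (mul_self_pos.mpr hne0) (by linarith)
        linarith
    · intro q ⟨⟨hsum, hq0, hq1⟩, hE⟩
      have hq' : q = (q.1, 1 - q.1) := by
        have : q.2 = 1 - q.1 := by linarith
        ext
        · rfl
        · exact this
      have h := (hE xs hsimp).1
      have hkey : quad A B β D (xI, 1-xI) (q.1, 1-q.1) - quad A B β D (q.1, 1-q.1) (q.1, 1-q.1)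
          = (xI - q.1) * (xI - q.1) * ((α + β) / 2) := key xI q.1
      rw [hq'] at h
      have h' : quad A B β D (xI, 1-xI) (q.1, 1-q.1) ≤ quad A B β D (q.1, 1-q.1) (q.1, 1-q.1) := h
      have hsq : (xI - q.1) * (xI - q.1) * ((α + β) / 2) ≤ 0 := by linarith
      have : xI - q.1 = 0 := by
        by_contra h0
        have hp : 0 < (xI - q.1) * (xI - q.1) * ((α + β) / 2) :=
          mul_pos (mul_self_pos.mpr h0) (by linarith)
        linarith
      rw [hq']
      have hq1x : q.1 = xI := by linarith
      simp [xs, hq1x]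
end
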